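/- arXiv:2301.06693 — 4 statements merged into one kernel-verified Lean document; each statement's English description precedes it below -/
import Mathlib

section
/- For a single formal derivative δ = d/dx on the polynomial ring R[x] over a commutative ℚ-algebra R, and a multilinear differential polynomial identity g = α·y₁^{(k₁)}⋯yₙ^{(kₙ)} + Σᵢ αᵢ mᵢ (each mᵢ a multilinear differential monomial with exponent tuple strictly greater than (k₁,…,kₙ) lexicographically, α ≠ 0), substituting yⱼ ↦ x^{kⱼ}/kⱼ! gives g = α ≠ 0. Hence g is not a differential identity of R[x]. -/
open Polynomial

/-- The multilinear differential monomial `y₁^{(j₁)}⋯yₙ^{(jₙ)}` evaluated at the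
polynomials `p₁,…,pₙ ∈ R[x]`. -/
noncomputable def mlMonomial {R : Type*} [CommRing R] {n : ℕ} (j : Fin n → ℕ)
    (p : Fin n → Polynomial R) : Polynomial R :=
  ∏ l, (fun q => derivative q)^[j l] (p l)

lemma iter_deriv_aux {R : Type*} [CommRing R] [Algebra ℚ R] (m k : ℕ)
    (h : k ≤ m) :
    (fun q : Polynomial R => derivative q)^[m] (((k.factorial : ℚ))⁻¹ • (X : Polynomial R) ^ k)
      = if m = k then 1 else 0 := by
  have hfun : (fun q : Polynomial R => derivative q) = fun q => derivative q := rfl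
  rcases eq_or_lt_of_le h with rfl | hlt
  · simp only [if_pos rfl]
    have : (fun q : Polynomial R => derivative q)^[k] (((k.factorial : ℚ))⁻¹ • (X : Polynomial R) ^ k)
        = ((k.factorial : ℚ))⁻¹ • (fun q : Polynomial R => derivative q)^[k] ((X : Polynomial R) ^ k) := by
      simp [Polynomial.iterate_derivative_smul ((k.factorial : ℚ))⁻¹ ((X : Polynomial R) ^ k) k]
    rw [this, Polynomial.iterate_derivative_X_pow_eq_smul, Nat.sub_self, pow_zero,
      Nat.descFactorial_self]
    rw [show ((k.factorial : R)) • (1 : Polynomial R) = ((k.factorial : ℚ)) • (1 : Polynomial R) by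
        rw [← map_natCast (algebraMap ℚ R), algebraMap_smul],
      smul_smul, inv_mul_cancel₀ (by exact_mod_cast k.factorial_ne_zero), one_smul, if_pos trivial]
  · rw [if_neg (Nat.ne_of_gt hlt)]
    have : (fun q : Polynomial R => derivative q)^[m] (((k.factorial : ℚ))⁻¹ • (X : Polynomial R) ^ k)
        = ((k.factorial : ℚ))⁻¹ • (fun q : Polynomial R => derivative q)^[m] ((X : Polynomial R) ^ k) := by
      simp [Polynomial.iterate_derivative_smul ((k.factorial : ℚ))⁻¹ ((X : Polynomial R) ^ k) m]
    rw [this, Polynomial.iterate_derivative_eq_zero, smul_zero]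
    calc ((X : Polynomial R) ^ k).natDegree ≤ k := natDegree_X_pow_le k
      _ < m := hlt

/-- For a multilinear differential polynomial
`g = α·y₁^{(k₁)}⋯yₙ^{(kₙ)} + Σᵢ αᵢ mᵢ`, where each `mᵢ` has exponent tuple strictly
greater than `(k₁,…,kₙ)` lexicographically and `α ≠ 0`, the substitution
`yⱼ ↦ x^{kⱼ}/kⱼ!` gives `g = α ≠ 0`; hence `g` is not a differential identity of `R[x]`. -/
theorem stmt6 {R : Type*} [CommRing R] [Algebra ℚ R] {n N : ℕ}
    (k : Fin n → ℕ) (α : R) (hα : α ≠ 0)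
    (exps : Fin N → Fin n → ℕ) (αs : Fin N → R)
    (hlex : ∀ i : Fin N, ∃ t : Fin n,
      (∀ l : Fin n, l < t → exps i l = k l) ∧ k t < exps i t)
    (g : (Fin n → Polynomial R) → Polynomial R)
    (hg : ∀ p, g p = α • mlMonomial k p + ∑ i, αs i • mlMonomial (exps i) p)
    (p₀ : Fin n → Polynomial R)
    (hp₀ : ∀ l, p₀ l = (((k l).factorial : ℚ))⁻¹ • (X : Polynomial R) ^ (k l)) :
    g p₀ = C α ∧ g p₀ ≠ 0 := by
  have hmain : mlMonomial k p₀ = 1 := by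
    unfold mlMonomial
    apply Finset.prod_eq_one
    intro l _
    rw [hp₀ l, iter_deriv_aux (k l) (k l) le_rfl, if_pos rfl]
  have hrest : ∀ i : Fin N, mlMonomial (exps i) p₀ = 0 := by
    intro i
    obtain ⟨t, -, ht⟩ := hlex i
    unfold mlMonomial
    apply Finset.prod_eq_zero (Finset.mem_univ t)
    rw [hp₀ t, iter_deriv_aux (exps i t) (k t) (le_of_lt ht),
      if_neg (Nat.ne_of_gt ht)]
  have hval : g p₀ = C α := by
    rw [hg, hmain]
    simp [hrest, smul_eq_C_mul]
  exact ⟨hval, hval ▸ fun h => hα (Polynomial.C_eq_zero.mp h)⟩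
end

section
/- Let R be a commutative ring and A an R-algebra (possibly nonassociative) that is a finitely generated free R-module. If R is equationally Noetherian (every system of polynomial equations over R in finitely many variables is equivalent to a finite subsystem), then every system of A-algebra equations over A in finitely many variables, when written in coordinates with respect to an R-basis of A, is equivalent to a finite subsystem; hence A is equationally Noetherian. -/
/-- Terms (polynomial expressions) over an `R`-algebra `A` in `n` variables, built
from constants of `A`, variables, addition, multiplication, and `R`-scalars. -/
inductive AlgTerm (R A : Type*) (n : ℕ) where
  | const : A → AlgTerm R A n
  | var : Fin n → AlgTerm R A n
  | add : AlgTerm R A n → AlgTerm R A n → AlgTerm R A n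
  | mul : AlgTerm R A n → AlgTerm R A n → AlgTerm R A n
  | smul : R → AlgTerm R A n → AlgTerm R A n

/-- Evaluation of a term at a point of `Aⁿ`. -/
def AlgTerm.eval {R A : Type*} [Semiring R] [NonUnitalNonAssocRing A] [Module R A] {n : ℕ}
    (v : Fin n → A) : AlgTerm R A n → A
  | const a => a
  | var i => v i
  | add s t => AlgTerm.eval v s + AlgTerm.eval v t
  | mul s t => AlgTerm.eval v s * AlgTerm.eval v t
  | smul r t => r • AlgTerm.eval v t

/-- `R` is equationally Noetherian: every system of polynomial equations over `R` in
finitely many variables is equivalent to a finite subsystem. -/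
def RingEqNoeth (R : Type*) [CommRing R] : Prop :=
  ∀ (n : ℕ) (S : Set (MvPolynomial (Fin n) R)),
    ∃ T ⊆ S, T.Finite ∧
      {a : Fin n → R | ∀ f ∈ S, MvPolynomial.eval a f = 0} =
      {a : Fin n → R | ∀ f ∈ T, MvPolynomial.eval a f = 0}

/-- The (possibly nonassociative) `R`-algebra `A` is equationally Noetherian. -/
def AlgEqNoeth (R A : Type*) [CommRing R] [NonUnitalNonAssocRing A] [Module R A] :
    Prop :=
  ∀ (n : ℕ) (S : Set (AlgTerm R A n)),
    ∃ T ⊆ S, T.Finite ∧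
      {a : Fin n → A | ∀ t ∈ S, AlgTerm.eval a t = 0} =
      {a : Fin n → A | ∀ t ∈ T, AlgTerm.eval a t = 0}


/-!
Writing every variable in coordinates with respect to `b`, each term `t` becomes `m` polynomials
over `R` (its coordinates), and `t` vanishes at a point exactly when all of them vanish at the
coordinate point. A finite subsystem of the resulting polynomial system, which exists since `R`
is equationally Noetherian, involves only finitely many terms, and these form the finite subsystem.
-/

open MvPolynomial Set

theorem Module.Basis.repr_mul {ι R A : Type*} [Fintype ι] [CommSemiring R]
    [NonUnitalNonAssocSemiring A] [Module R A] [SMulCommClass R A A] [IsScalarTower R A A]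
    (b : Module.Basis ι R A) (x y : A) (k : ι) :
    b.repr (x * y) k = ∑ i, ∑ j, b.repr (b i * b j) k * (b.repr x i * b.repr y j) := by
  conv_lhs => rw [← b.sum_repr x, ← b.sum_repr y]
  rw [Finset.sum_mul]
  simp only [Finset.mul_sum, smul_mul_assoc, mul_smul_comm, map_sum, map_smul,
    Finsupp.coe_finsetSum, Finset.sum_apply, Finsupp.coe_smul, Pi.smul_apply, smul_eq_mul]
  exact Finset.sum_congr rfl fun i _ => Finset.sum_congr rfl fun j _ => by ring

namespace AlgTerm

variable {R A : Type*} [CommSemiring R] [NonUnitalNonAssocRing A] [Module R A] {m n : ℕ}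
  (b : Module.Basis (Fin m) R A)

/-- The point of `R^(m * n)` listing the coordinates of `v`: coordinate `k` of `v i` sits at
index `finProdFinEquiv (k, i)`. -/
noncomputable def coords (v : Fin n → A) : Fin (m * n) → R :=
  fun p => b.repr (v (finProdFinEquiv.symm p).2) (finProdFinEquiv.symm p).1

noncomputable def coordPoly : AlgTerm R A n → Fin m → MvPolynomial (Fin (m * n)) R
  | const a => fun k => C (b.repr a k)
  | var i => fun k => X (finProdFinEquiv (k, i))
  | add s t => fun k => coordPoly s k + coordPoly t k
  | mul s t => fun k => ∑ i, ∑ j, C (b.repr (b i * b j) k) * (coordPoly s i * coordPoly t j)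
  | smul r t => fun k => C r * coordPoly t k

variable [SMulCommClass R A A] [IsScalarTower R A A]

theorem eval_coordPoly (v : Fin n → A) (t : AlgTerm R A n) (k : Fin m) :
    MvPolynomial.eval (coords b v) (t.coordPoly b k) = b.repr (t.eval v) k := by
  induction t generalizing k with
  | const a => simp only [coordPoly, AlgTerm.eval, eval_C]
  | var i => simp only [coordPoly, AlgTerm.eval, eval_X, coords, Equiv.symm_apply_apply]
  | add s t hs ht => simp only [coordPoly, AlgTerm.eval, map_add, hs, ht, Finsupp.add_apply]
  | mul s t hs ht =>
    simp only [coordPoly, AlgTerm.eval, map_sum, map_mul, eval_C, hs, ht]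
    rw [b.repr_mul]
  | smul r t ht =>
    simp only [coordPoly, AlgTerm.eval, map_mul, eval_C, ht, map_smul, Finsupp.smul_apply,
      smul_eq_mul]

theorem eval_eq_zero_iff (v : Fin n → A) (t : AlgTerm R A n) :
    t.eval v = 0 ↔ ∀ k, MvPolynomial.eval (coords b v) (t.coordPoly b k) = 0 := by
  rw [← b.repr.map_eq_zero_iff, Finsupp.ext_iff]
  simp only [eval_coordPoly, Finsupp.coe_zero, Pi.zero_apply]

end AlgTerm

/-- If `R` is an equationally Noetherian commutative ring and `A` is an `R`-algebra
(possibly nonassociative) that is a finitely generated free `R`-module, then `A` is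
equationally Noetherian. -/
theorem stmt9 {R A : Type*} [CommRing R] [NonUnitalNonAssocRing A] [Module R A]
    [SMulCommClass R A A] [IsScalarTower R A A] {m : ℕ}
    (b : Module.Basis (Fin m) R A) (hR : RingEqNoeth R) :
    AlgEqNoeth R A := by
  intro n S
  let coordPolys : AlgTerm R A n × Fin m → MvPolynomial (Fin (m * n)) R :=
    fun p => p.1.coordPoly b p.2
  obtain ⟨P, hPS, hPfin, hP⟩ :=
    exists_subset_image_finite_and.1 (hR (m * n) (coordPolys '' (S ×ˢ univ)))
  have hTS : Prod.fst '' P ⊆ S := by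
    rintro _ ⟨p, hp, rfl⟩
    exact (hPS hp).1
  refine ⟨Prod.fst '' P, hTS, hPfin.image _,
    subset_antisymm (fun v hv t ht => hv t (hTS ht)) fun v hv t ht => ?_⟩
  have hvP : AlgTerm.coords b v ∈ {a | ∀ f ∈ coordPolys '' P, eval a f = 0} := by
    rintro _ ⟨p, hp, rfl⟩
    exact (AlgTerm.eval_eq_zero_iff b v p.1).1 (hv p.1 ⟨p, hp, rfl⟩) p.2
  rw [← hP] at hvP
  exact (AlgTerm.eval_eq_zero_iff b v t).2 fun k => hvP _ ⟨(t, k), ⟨ht, trivial⟩, rfl⟩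
end

section
/- Let C = R{y_{ij} : 1≤i≤n, 1≤j≤m} be a differential polynomial algebra over a ℚ-algebra R, and let Yᵢ = Σⱼ y_{ij}∂ⱼ ∈ L(C). If F = f₁∂₁+⋯+fₘ∂ₘ is a nonzero element of the left-symmetric subalgebra generated by Y₁,…,Yₙ (i.e., some fᵢ ≠ 0 in C), then there exists a differential R-algebra homomorphism ψ : C → R[x₁,…,xₘ] (with derivations ∂/∂xⱼ) such that ψ(fᵢ) ≠ 0; consequently the induced left-symmetric homomorphism sends F to a nonzero element of the left-symmetric Witt algebra Lₘ. -/
open MvPolynomial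

/-- Variables `y_{ij}^θ` of the differential polynomial ring `C = R{y_{ij}}`. -/
abbrev CVars (m n : ℕ) := (Fin n × Fin m) × (Fin m → ℕ)

/-- The derivation `∂ₖ` of `C = R{y_{ij}}`, shifting the multi-index `θ`. -/
noncomputable def dk (R : Type*) [CommRing R] (m n : ℕ) (k : Fin m) :
    Derivation R (MvPolynomial (CVars m n) R) (MvPolynomial (CVars m n) R) :=
  mkDerivation R fun v => X (v.1, v.2 + Pi.single k 1)

/-- The left-symmetric product on `L(C)`: `(u ∘ v)ⱼ = Σᵢ uᵢ · ∂ᵢ(vⱼ)`. -/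
noncomputable def circC (R : Type*) [CommRing R] (m n : ℕ)
    (u v : Fin m → MvPolynomial (CVars m n) R) : Fin m → MvPolynomial (CVars m n) R :=
  fun j => ∑ i, u i * dk R m n i (v j)

/-- `Yᵢ = Σⱼ y_{ij} ∂ⱼ`. -/
noncomputable def YvC (R : Type*) [CommRing R] (m n : ℕ) (i : Fin n) :
    Fin m → MvPolynomial (CVars m n) R :=
  fun j => X ((i, j), (0 : Fin m → ℕ))

/-- Membership in the left-symmetric subalgebra `𝐋ₙ ⊆ L(C)` generated by `Y₁,…,Yₙ`. -/
inductive InLn (R : Type*) [CommRing R] (m n : ℕ) :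
    (Fin m → MvPolynomial (CVars m n) R) → Prop where
  | gen : ∀ i : Fin n, InLn R m n (YvC R m n i)
  | add : ∀ u v, InLn R m n u → InLn R m n v → InLn R m n (u + v)
  | smul : ∀ (r : R) (u), InLn R m n u → InLn R m n (r • u)
  | mul : ∀ u v, InLn R m n u → InLn R m n v → InLn R m n (circC R m n u v)

/-- Separation of points: a nonzero polynomial over a `ℚ`-algebra does not vanish at
some rational point (with finite support). -/
lemma exists_rat_point {R : Type*} [CommRing R] [Algebra ℚ R] {σ : Type*}
    (f : MvPolynomial σ R) (hf : f ≠ 0) :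
    ∃ Q : σ →₀ ℚ, eval (fun s => algebraMap ℚ R (Q s)) f ≠ 0 := by
  classical
  obtain ⟨d₀, hd₀⟩ : ∃ d, coeff d f ≠ 0 := by
    by_contra h; push_neg at h
    exact hf (MvPolynomial.ext _ _ fun d => by simp [h d])
  let B := Module.Basis.ofVectorSpace ℚ R
  have hr : B.repr (coeff d₀ f) ≠ 0 := fun h0 => hd₀ (B.repr.map_eq_zero_iff.mp h0)
  obtain ⟨b, hb⟩ : ∃ b, B.repr (coeff d₀ f) b ≠ 0 := by
    by_contra h; push_neg at h; exact hr (Finsupp.ext h)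
  let φ : R →ₗ[ℚ] ℚ := (Finsupp.lapply b) ∘ₗ B.repr.toLinearMap
  have hφ : φ (coeff d₀ f) ≠ 0 := hb
  -- the "shadow" polynomial over ℚ
  let f₀ : MvPolynomial σ ℚ := ∑ d ∈ f.support, monomial d (φ (coeff d f))
  have hc0 : coeff d₀ f₀ = φ (coeff d₀ f) := by
    have hd₀m : d₀ ∈ f.support := by simpa [mem_support_iff] using hd₀
    simp only [f₀, MvPolynomial.coeff_sum, coeff_monomial]
    rw [Finset.sum_ite_eq' f.support d₀ _]
    simp [hd₀m]
  have hf₀ : f₀ ≠ 0 := fun h0 => hφ (by rw [← hc0, h0, coeff_zero])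
  obtain ⟨q, hq⟩ : ∃ q : σ → ℚ, eval q f₀ ≠ 0 := by
    by_contra h; push_neg at h
    exact hf₀ (MvPolynomial.funext (fun x => by rw [h x, map_zero]))
  -- restrict q to the (finitely many) variables of f₀
  let Q : σ →₀ ℚ := Finsupp.onFinset f₀.vars (fun s => if s ∈ f₀.vars then q s else 0)
    (fun s h => by by_contra hm; simp [hm] at h)
  have hQq : eval (⇑Q) f₀ = eval q f₀ := by
    show eval₂Hom (RingHom.id ℚ) (⇑Q) f₀ = eval₂Hom (RingHom.id ℚ) q f₀
    exact eval₂Hom_congr' rfl (fun s hs _ => by simp [Q, Finsupp.onFinset_apply, hs]) rfl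
  refine ⟨Q, fun h0 => ?_⟩
  have key : φ (eval (fun s => algebraMap ℚ R (Q s)) f) = eval (⇑Q) f₀ := by
    rw [eval_eq, map_sum]
    simp only [f₀, map_sum, eval_monomial]
    refine Finset.sum_congr rfl fun d _ => ?_
    have h1 : coeff d f * ∏ s ∈ d.support, (algebraMap ℚ R (Q s)) ^ d s
        = (∏ s ∈ d.support, Q s ^ d s) • coeff d f := by
      rw [Algebra.smul_def, map_prod]
      simp_rw [map_pow]
      ring
    rw [h1, map_smul, smul_eq_mul, Finsupp.prod, mul_comm]
  rw [h0, map_zero] at key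
  exact hq (hQq ▸ key.symm)

open Classical in
/-- The polynomial substituted for the variable `y_v`: the derivative `∂^{v.2}` of the
polynomial `Σ_θ Q((i,j),θ)·x^θ/θ!` determined by the finitely supported point `Q`. -/
noncomputable def gfun {R : Type*} [CommRing R] [Algebra ℚ R] {m n : ℕ}
    (Q : CVars m n →₀ ℚ) (v : CVars m n) : MvPolynomial (Fin m) R :=
  ∑ w ∈ Q.support,
    if v.1 = w.1 ∧ v.2 ≤ w.2 then
      monomial (Finsupp.equivFunOnFinite.symm (w.2 - v.2))
        (algebraMap ℚ R (Q w / ∏ j, Nat.factorial ((w.2 - v.2) j)))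
    else 0

/-- The family `gfun Q` intertwines the shift of multi-indices with `∂/∂xₖ`. -/
lemma pderiv_gfun {R : Type*} [CommRing R] [Algebra ℚ R] {m n : ℕ}
    (Q : CVars m n →₀ ℚ) (k : Fin m) (v : CVars m n) :
    pderiv k (gfun (R := R) Q v) = gfun Q (v.1, v.2 + Pi.single k 1) := by
  classical
  unfold gfun
  rw [map_sum]
  refine Finset.sum_congr rfl fun w hw => ?_
  by_cases h1 : v.1 = w.1
  · by_cases h2 : v.2 + Pi.single k 1 ≤ w.2
    · have h2' : v.2 ≤ w.2 := le_trans (by intro j; simp) h2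
      rw [if_pos ⟨h1, h2'⟩, if_pos ⟨h1, h2⟩, pderiv_monomial]
      have hk : v.2 k + 1 ≤ w.2 k := by simpa using h2 k
      set β : Fin m → ℕ := w.2 - v.2 with hβ
      set β' : Fin m → ℕ := w.2 - (v.2 + Pi.single k 1) with hβ'
      have hβj : ∀ j, j ≠ k → β j = β' j := by
        intro j hjk
        simp [hβ, hβ', Pi.single_apply, hjk]
      have hβk : β k = β' k + 1 := by
        have h'' : β' k = w.2 k - (v.2 k + 1) := by simp [hβ']
        have h' : β k = w.2 k - v.2 k := rfl
        omega
      have hexp : Finsupp.equivFunOnFinite.symm β - Finsupp.single k 1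
          = Finsupp.equivFunOnFinite.symm β' := by
        ext j
        by_cases hjk : j = k
        · subst hjk; simp [hβk]
        · simp [Ne.symm hjk, hβj j hjk]
      rw [hexp]
      congr 1
      have hsk : (Finsupp.equivFunOnFinite.symm β) k = β k := rfl
      rw [hsk]
      have hfactN : (∏ j, Nat.factorial (β j)) = (∏ j, Nat.factorial (β' j)) * β k := by
        have hterm : ∀ j : Fin m, Nat.factorial (β j)
            = Nat.factorial (β' j) * (if j = k then β k else 1) := by
          intro j
          by_cases hjk : j = k
          · subst hjk
            rw [hβk, if_pos rfl, Nat.factorial_succ]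
            ring
          · rw [hβj j hjk, if_neg hjk, mul_one]
        rw [Finset.prod_congr rfl (fun j _ => hterm j), Finset.prod_mul_distrib]
        congr 1
        simp
      have hfactQ : ((∏ j, Nat.factorial (β j) : ℕ) : ℚ)
          = ((∏ j, Nat.factorial (β' j) : ℕ) : ℚ) * (β k : ℚ) := by
        exact_mod_cast hfactN
      have hβk0 : (β k : ℚ) ≠ 0 := by
        have : 0 < β k := by rw [hβk]; omega
        exact_mod_cast this.ne'
      rw [show ((β k : ℕ) : R) = algebraMap ℚ R ((β k : ℕ) : ℚ) by simp, ← map_mul]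
      congr 1
      rw [hfactQ, ← div_div, div_mul_cancel₀ _ hβk0]
    · by_cases h2' : v.2 ≤ w.2
      · rw [if_pos ⟨h1, h2'⟩, if_neg (fun hc => h2 hc.2), pderiv_monomial]
        have hk : (Finsupp.equivFunOnFinite.symm (w.2 - v.2)) k = 0 := by
          have hle : w.2 k ≤ v.2 k := by
            by_contra hlt
            exact h2 (fun j => by
              by_cases hjk : j = k
              · subst hjk; simpa using Nat.lt_of_not_le hlt
              · simpa [Pi.single_apply, hjk] using h2' j)
          show w.2 k - v.2 k = 0
          omega
        rw [hk]
        simp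
      · rw [if_neg (fun hc => h2' hc.2), if_neg (fun hc => h2 hc.2), map_zero]
  · rw [if_neg (fun hc => h1 hc.1), if_neg (fun hc => h1 hc.1), map_zero]

/-- Evaluating `gfun Q v` at `x = 0` recovers `Q v`. -/
lemma eval_zero_gfun {R : Type*} [CommRing R] [Algebra ℚ R] {m n : ℕ}
    (Q : CVars m n →₀ ℚ) (v : CVars m n) :
    eval (fun _ : Fin m => (0 : R)) (gfun Q v) = algebraMap ℚ R (Q v) := by
  classical
  unfold gfun
  rw [map_sum]
  have hterm : ∀ w ∈ Q.support, w ≠ v →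
      eval (fun _ : Fin m => (0 : R))
        (if v.1 = w.1 ∧ v.2 ≤ w.2 then
          monomial (Finsupp.equivFunOnFinite.symm (w.2 - v.2))
            (algebraMap ℚ R (Q w / ∏ j, Nat.factorial ((w.2 - v.2) j)))
        else 0) = 0 := by
    intro w _ hwv
    split_ifs with hc
    · rw [eval_monomial]
      have hne : Finsupp.equivFunOnFinite.symm (w.2 - v.2) ≠ 0 := by
        intro h0
        apply hwv
        have h22 : w.2 = v.2 := by
          funext j
          have ha : (Finsupp.equivFunOnFinite.symm (w.2 - v.2)) j = 0 := by rw [h0]; rfl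
          have hb : w.2 j - v.2 j = 0 := ha
          have hcj : v.2 j ≤ w.2 j := hc.2 j
          omega
        exact Prod.ext hc.1.symm h22
      obtain ⟨j, hj⟩ : ∃ j, (Finsupp.equivFunOnFinite.symm (w.2 - v.2)) j ≠ 0 := by
        by_contra h; push_neg at h; exact hne (Finsupp.ext h)
      rw [Finsupp.prod]
      rw [Finset.prod_eq_zero (Finsupp.mem_support_iff.mpr hj) (zero_pow hj)]
      simp
    · simp
  by_cases hv : v ∈ Q.support
  · rw [Finset.sum_eq_single_of_mem v hv hterm]
    rw [if_pos ⟨rfl, le_refl _⟩]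
    have h0 : (Finsupp.equivFunOnFinite.symm (v.2 - v.2)) = 0 := by ext j; simp
    rw [h0, eval_monomial]
    simp
  · rw [Finset.sum_eq_zero (fun w hw => hterm w hw (fun h => hv (h ▸ hw)))]
    rw [Finsupp.notMem_support_iff.mp hv]
    simp

/-- If `F = f₁∂₁+⋯+fₘ∂ₘ` is an element of the left-symmetric subalgebra generated by
`Y₁,…,Yₙ` with `fᵢ ≠ 0`, then there is a differential `R`-algebra homomorphism
`ψ : C → R[x₁,…,xₘ]` with `ψ(fᵢ) ≠ 0`; consequently the induced left-symmetric
homomorphism sends `F` to a nonzero element of the left-symmetric Witt algebra `Lₘ`. -/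
theorem stmt15 {R : Type*} [CommRing R] [Algebra ℚ R] {m n : ℕ}
    (F : Fin m → MvPolynomial (CVars m n) R) (hF : InLn R m n F)
    (i : Fin m) (hFi : F i ≠ 0) :
    ∃ ψ : MvPolynomial (CVars m n) R →ₐ[R] MvPolynomial (Fin m) R,
      (∀ (k : Fin m) (p : MvPolynomial (CVars m n) R),
        ψ (dk R m n k p) = pderiv k (ψ p)) ∧
      ψ (F i) ≠ 0 ∧
      (fun j => ψ (F j)) ≠ (0 : Fin m → MvPolynomial (Fin m) R) := by
  classical
  obtain ⟨Q, hQ⟩ := exists_rat_point (F i) hFi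
  have haev : ∀ {σ : Type} (f : σ → R) (p : MvPolynomial σ R), aeval f p = eval f p := by
    intro σ f p
    rfl
  let ψ : MvPolynomial (CVars m n) R →ₐ[R] MvPolynomial (Fin m) R := aeval (gfun Q)
  have hcomm : ∀ (k : Fin m) (p : MvPolynomial (CVars m n) R),
      ψ (dk R m n k p) = pderiv k (ψ p) := by
    intro k p
    induction p using MvPolynomial.induction_on with
    | C a =>
      show aeval (gfun (R := R) Q) _ = pderiv k (aeval (gfun (R := R) Q) _)
      rw [show (C a : MvPolynomial (CVars m n) R)
          = algebraMap R (MvPolynomial (CVars m n) R) a from rfl]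
      rw [Derivation.map_algebraMap, map_zero, AlgHom.commutes]
      rw [show algebraMap R (MvPolynomial (Fin m) R) a = C a from rfl, pderiv_C]
    | add p q hp hq => simp [map_add, hp, hq]
    | mul_X p v hp =>
      show aeval (gfun (R := R) Q) _ = pderiv k (aeval (gfun (R := R) Q) _)
      replace hp : aeval (gfun (R := R) Q) (dk R m n k p)
          = pderiv k (aeval (gfun (R := R) Q) p) := hp
      have hXv : dk R m n k (X v) = X (v.1, v.2 + Pi.single k 1) := by
        rw [dk, mkDerivation_X]
      rw [Derivation.leibniz, hXv]
      simp only [smul_eq_mul, map_add, map_mul, aeval_X, hp]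
      rw [show (gfun Q (v.1, v.2 + Pi.single k 1) : MvPolynomial (Fin m) R)
          = pderiv k (gfun Q v) from (pderiv_gfun Q k v).symm]
      rw [Derivation.leibniz]
      simp only [smul_eq_mul]
  have hne : ψ (F i) ≠ 0 := by
    show aeval (gfun (R := R) Q) (F i) ≠ 0
    intro h0
    apply hQ
    have h2 : (aeval (fun _ : Fin m => (0 : R))) ((aeval (gfun (R := R) Q)) (F i))
        = aeval (fun v => (aeval (fun _ : Fin m => (0 : R))) (gfun (R := R) Q v)) (F i) :=
      comp_aeval_apply _ _ _
    rw [h0, map_zero] at h2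
    have h3 : (fun v => (aeval (fun _ : Fin m => (0 : R))) (gfun (R := R) Q v))
        = fun s => algebraMap ℚ R (Q s) := by
      funext v
      rw [haev, eval_zero_gfun]
    rw [h3, haev] at h2
    exact h2.symm
  exact ⟨ψ, hcomm, hne, fun h => hne (congrFun h i)⟩
end

section
/- Let R be a commutative ring containing ℚ and Cₘ = R[x₁,…,xₘ] the differential algebra with derivations ∂/∂x₁,…,∂/∂xₘ. Then Cₘ satisfies no nontrivial differential polynomial identity: for every nonzero differential polynomial f ∈ R{y₁,…,yₙ} (in commuting derivation operators δ₁,…,δₘ) there exist polynomials p₁,…,pₙ ∈ Cₘ with f(p₁,…,pₙ) ≠ 0. -/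
/-!
Over a ℚ-algebra a nonzero polynomial `f` takes a nonzero value `f(b)`: a ℚ-linear functional
that is nonzero on some coefficient of `f` turns it into a nonzero rational polynomial, which
does not vanish at some rational point. Since `θ(p)(0) = θ! · coeff_θ p` and `θ!` is invertible,
Taylor polynomials `pᵢ` realise any prescribed values `θ(pᵢ)(0) = b(i, θ)` on the finitely many
variables `yᵢ^θ` of `f`. The constant coefficient of `f(p₁,…,pₙ)` is then `f(b) ≠ 0`.
-/

open MvPolynomial

/-- Apply the derivative operator `θ = δ₁^{θ 1} ⋯ δₘ^{θ m}` (with `δⱼ = ∂/∂xⱼ`)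
to a polynomial in `R[x₁,…,xₘ]`. -/
noncomputable def applyTheta {R : Type*} [CommRing R] {m : ℕ} (θ : Fin m → ℕ)
    (p : MvPolynomial (Fin m) R) : MvPolynomial (Fin m) R :=
  (List.finRange m).foldr (fun j q => (fun t => pderiv j t)^[θ j] q) p

namespace MvPolynomial

variable {R σ : Type*} [CommRing R]

theorem constantCoeff_aeval {τ : Type*} (g : σ → MvPolynomial τ R) (f : MvPolynomial σ R) :
    constantCoeff (aeval g f) = eval (fun i => constantCoeff (g i)) f := by
  simp only [← eval_zero, aeval_eq_bind₁]
  exact eval₂Hom_bind₁ _ _ _ _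

theorem exists_eval_ne_zero_of_algebra_rat [Algebra ℚ R] {f : MvPolynomial σ R} (hf : f ≠ 0) :
    ∃ b : σ → R, eval b f ≠ 0 := by
  classical
  obtain ⟨s, hs⟩ := ne_zero_iff.mp hf
  obtain ⟨φ, hφ⟩ := Module.Projective.exists_dual_ne_zero ℚ hs
  set g : MvPolynomial σ ℚ := ∑ t ∈ f.support, monomial t (φ (coeff t f))
  have hg : g ≠ 0 := ne_zero_iff.mpr ⟨s, by
    simpa [g, coeff_sum, coeff_monomial, mem_support_iff.mpr hs] using hφ⟩
  obtain ⟨q, hq⟩ : ∃ q, eval q g ≠ 0 := by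
    by_contra! h
    exact hg (funext fun q => by simpa using h q)
  have hφ_eval : φ (eval (algebraMap ℚ R ∘ q) f) = eval q g := by
    rw [eval_eq, map_sum, map_sum]
    refine Finset.sum_congr rfl fun t _ => ?_
    simp only [eval_monomial, Finsupp.prod, Function.comp_apply, ← map_pow, ← map_prod]
    rw [mul_comm, ← Algebra.smul_def, map_smul, smul_eq_mul, mul_comm]
  exact ⟨algebraMap ℚ R ∘ q, fun h => hq (by rw [← hφ_eval, h, map_zero])⟩

theorem coeff_pderiv_iterate (j : σ) (k : ℕ) (d : σ →₀ ℕ) (p : MvPolynomial σ R) :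
    coeff d ((pderiv j)^[k] p) =
      coeff (d + Finsupp.single j k) p * ((d j + k).descFactorial k : ℕ) := by
  induction k generalizing p with
  | zero => simp
  | succ k ih =>
    rw [Function.iterate_succ_apply, ih, coeff_pderiv, add_assoc, ← Finsupp.single_add,
      ← add_assoc (d j), Nat.succ_descFactorial_succ]
    simp only [Finsupp.add_apply, Finsupp.single_eq_same]
    push_cast
    ring

theorem coeff_foldr_pderiv_iterate (θ : σ → ℕ) {l : List σ} (hl : l.Nodup) (d : σ →₀ ℕ)
    (p : MvPolynomial σ R) :
    coeff d (l.foldr (fun j q => (pderiv j)^[θ j] q) p) =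
      coeff (d + (l.map fun j => Finsupp.single j (θ j)).sum) p *
        ((l.map fun j => (d j + θ j).descFactorial (θ j)).prod : ℕ) := by
  induction l generalizing d with
  | nil => simp
  | cons j l ih =>
    obtain ⟨hj, hl⟩ := List.nodup_cons.mp hl
    have hd : ∀ i ∈ l, ((d + Finsupp.single j (θ j)) i + θ i).descFactorial (θ i) =
        (d i + θ i).descFactorial (θ i) := fun i hi => by
      simp [(ne_of_mem_of_not_mem hi hj).symm]
    rw [List.foldr_cons, coeff_pderiv_iterate, ih hl, List.map_congr_left hd]
    simp only [List.map_cons, List.sum_cons, List.prod_cons, add_assoc, Nat.cast_mul]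
    ring

end MvPolynomial

open Finsupp in
theorem constantCoeff_applyTheta {R : Type*} [CommRing R] {m : ℕ} (θ : Fin m → ℕ)
    (p : MvPolynomial (Fin m) R) :
    constantCoeff (applyTheta θ p) =
      coeff (equivFunOnFinite.symm θ) p * (∏ j, (θ j).factorial : ℕ) := by
  rw [applyTheta, constantCoeff_eq, coeff_foldr_pderiv_iterate θ (List.nodup_finRange m),
    zero_add, equivFunOnFinite_symm_eq_sum, Fin.sum_univ_def]
  simp [Fin.prod_univ_def, Nat.descFactorial_self]

open Finsupp in
theorem exists_constantCoeff_applyTheta_eq {R : Type*} [CommRing R] [Algebra ℚ R] {m : ℕ}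
    (S : Finset (Fin m → ℕ)) (b : (Fin m → ℕ) → R) :
    ∃ p : MvPolynomial (Fin m) R, ∀ θ ∈ S, constantCoeff (applyTheta θ p) = b θ := by
  refine ⟨∑ θ ∈ S, monomial (equivFunOnFinite.symm θ)
    (algebraMap ℚ R (∏ j, ((θ j).factorial : ℚ))⁻¹ * b θ), fun θ hθ => ?_⟩
  have hfact : (∏ j, ((θ j).factorial : ℚ)) ≠ 0 := by positivity
  rw [constantCoeff_applyTheta, coeff_sum]
  simp only [coeff_monomial, equivFunOnFinite.symm.apply_eq_iff_eq, Finset.sum_ite_eq', if_pos hθ]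
  rw [mul_comm, ← mul_assoc, ← map_natCast (algebraMap ℚ R), ← map_mul, Nat.cast_prod,
    mul_inv_cancel₀ hfact, map_one, one_mul]

/-- `Cₘ = R[x₁,…,xₘ]` with the partial derivatives satisfies no nontrivial
differential polynomial identity: for every nonzero differential polynomial
`f ∈ R{y₁,…,yₙ}` (modelled as a polynomial in the variables `yᵢ^θ`) there exist
polynomials `p₁,…,pₙ ∈ Cₘ` with `f(p₁,…,pₙ) ≠ 0`. -/
theorem stmt17 {R : Type*} [CommRing R] [Algebra ℚ R] {m n : ℕ}
    (f : MvPolynomial (Fin n × (Fin m → ℕ)) R) (hf : f ≠ 0) :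
    ∃ p : Fin n → MvPolynomial (Fin m) R,
      aeval (fun v : Fin n × (Fin m → ℕ) => applyTheta v.2 (p v.1)) f ≠ 0 := by
  obtain ⟨b, hb⟩ := exists_eval_ne_zero_of_algebra_rat hf
  choose p hp using fun i =>
    exists_constantCoeff_applyTheta_eq (f.vars.image Prod.snd) fun θ => b (i, θ)
  refine ⟨p, fun h => hb ?_⟩
  calc eval b f = eval (fun v => constantCoeff (applyTheta v.2 (p v.1))) f :=
        eval₂Hom_congr' rfl (fun v hv _ => (hp v.1 v.2 (Finset.mem_image_of_mem _ hv)).symm) rfl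
    _ = 0 := by rw [← constantCoeff_aeval, h, map_zero]
end
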